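/- arXiv:2208.05589 — 3 statements merged into one kernel-verified Lean document; each statement's English description precedes it below -/
import Mathlib

section
/- If f(n) \ll n^\alpha for some 0 \le \alpha < 1, then \sum_{n \le x} f(\lfloor x/n \rfloor) = C_f x + O(x^{(1+\alpha)/2}), where C_f = \sum_{n=1}^\infty f(n)/(n(n+1)). -/
/-!
Group the `n ≤ x` by the value `m = ⌊x/n⌋` (Dirichlet's hyperbola method). A value `m ≥ 1` is
taken exactly `⌊x/m⌋ - ⌊x/(m+1)⌋ = x/(m(m+1)) + O(1)` times, so the values `m ≤ √x` give
`x · ∑_{m ≤ √x} f(m)/(m(m+1))` up to an error `O(√x · √x^α)`. The remaining `n` are those below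
`√x`, contributing `O(∑_{n ≤ √x} (x/n)^α) = O(x^((1+α)/2))`, and the missing tail
`x · ∑_{m > √x} f(m)/(m(m+1)) = O(x · √x^(α-1))` is of the same size. Both power sums are
estimated by telescoping, using the concavity of `t ↦ t^(1-α)`.
-/

open Finset

theorem Nat.mem_Ioc_div_iff {N m n : ℕ} (hm : 0 < m) :
    n ∈ Ioc (N / (m + 1)) (N / m) ↔ 0 < n ∧ N / n = m := by
  rw [mem_Ioc, Nat.div_lt_iff_lt_mul (by omega), Nat.le_div_iff_mul_le hm]
  constructor
  · rintro ⟨hlt, hle⟩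
    have hn : 0 < n := Nat.pos_of_ne_zero (by rintro rfl; simp at hlt)
    refine ⟨hn, le_antisymm ?_ ?_⟩
    · exact Nat.lt_succ_iff.mp ((Nat.div_lt_iff_lt_mul hn).mpr (by linarith))
    · exact (Nat.le_div_iff_mul_le hn).mpr (by linarith)
  · rintro ⟨hn, rfl⟩
    have hlt := (Nat.div_lt_iff_lt_mul hn).mp (Nat.lt_succ_self (N / n))
    have hle := Nat.div_mul_le_self N n
    constructor <;> linarith

theorem Finset.sum_Ioc_comp_div_eq {M : Type*} [AddCommMonoid M] (g : ℕ → M) (N K : ℕ) :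
    ∑ n ∈ Ioc 0 N, g (N / n) =
      ∑ n ∈ Ioc 0 (N / (K + 1)), g (N / n) + ∑ m ∈ Ioc 0 K, (N / m - N / (m + 1)) • g m := by
  rw [← sum_Ioc_consecutive _ (Nat.zero_le _) (Nat.div_le_self N (K + 1))]
  congr 1
  have hmaps : ∀ n ∈ Ioc (N / (K + 1)) N, N / n ∈ Ioc 0 K := by
    intro n hn
    obtain ⟨hlt, hle⟩ := mem_Ioc.mp hn
    have hn : 0 < n := Nat.zero_lt_of_lt hlt
    rw [Nat.div_lt_iff_lt_mul (Nat.succ_pos K)] at hlt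
    exact mem_Ioc.mpr ⟨Nat.div_pos hle hn,
      Nat.lt_succ_iff.mp ((Nat.div_lt_iff_lt_mul hn).mpr (by linarith))⟩
  rw [← sum_fiberwise_of_maps_to hmaps]
  refine sum_congr rfl fun m hm => ?_
  obtain ⟨hm0, hmK⟩ := mem_Ioc.mp hm
  have hfiber : {n ∈ Ioc (N / (K + 1)) N | N / n = m} = Ioc (N / (m + 1)) (N / m) := by
    ext n
    have key := Nat.mem_Ioc_div_iff (N := N) (n := n) hm0
    rw [mem_filter, mem_Ioc]
    constructor
    · rintro ⟨⟨hlt, -⟩, hq⟩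
      exact key.mpr ⟨Nat.zero_lt_of_lt hlt, hq⟩
    · intro h
      obtain ⟨hlt, hle⟩ := mem_Ioc.mp h
      exact ⟨⟨(Nat.div_le_div_left (by omega) (by omega)).trans_lt hlt,
        hle.trans (Nat.div_le_self _ _)⟩, (key.mp h).2⟩
  rw [sum_congr rfl fun n hn => congrArg g (mem_filter.mp hn).2, hfiber, sum_const, Nat.card_Ioc]

namespace Real

variable {α : ℝ}

theorem one_sub_mul_rpow_neg_le_rpow_sub_rpow (hα0 : 0 ≤ α) (hα1 : α ≤ 1) {c : ℝ} (hc : 0 ≤ c) :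
    (1 - α) * (c + 1) ^ (-α) ≤ (c + 1) ^ (1 - α) - c ^ (1 - α) := by
  have h := (concaveOn_rpow (p := 1 - α) (by linarith) (by linarith)).le_slope_of_hasDerivAt
    (x := c) (y := c + 1) hc (by simp only [Set.mem_Ici]; linarith) (by linarith)
    (hasDerivAt_rpow_const (Or.inl (by positivity)))
  simpa [slope_def_field] using h

theorem one_sub_mul_rpow_sub_one_div_le (hα0 : 0 ≤ α) (hα1 : α ≤ 1) {c : ℝ} (hc : 0 < c) :
    (1 - α) * (c ^ (α - 1) / (c + 1)) ≤ c ^ (α - 1) - (c + 1) ^ (α - 1) := by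
  -- divide the concavity estimate by `c^(1-α) (c+1)^(1-α)`
  have h := one_sub_mul_rpow_neg_le_rpow_sub_rpow hα0 hα1 hc.le
  rw [show -α = 1 - α - 1 by ring, rpow_sub_one (by linarith)] at h
  rw [show α - 1 = -(1 - α) by ring, rpow_neg hc.le, rpow_neg (by linarith)]
  have hu : 0 < c ^ (1 - α) := rpow_pos_of_pos hc _
  have hv : 0 < (c + 1) ^ (1 - α) := rpow_pos_of_pos (by linarith) _
  generalize c ^ (1 - α) = u at *
  generalize (c + 1) ^ (1 - α) = v at *
  calc (1 - α) * (u⁻¹ / (c + 1)) = (1 - α) * (v / (c + 1)) / (u * v) := by field_simp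
    _ ≤ (v - u) / (u * v) := by gcongr
    _ = u⁻¹ - v⁻¹ := by field_simp

theorem sum_Ioc_rpow_neg_le (hα0 : 0 ≤ α) (hα1 : α < 1) (T : ℕ) :
    ∑ n ∈ Ioc 0 T, (n : ℝ) ^ (-α) ≤ (T : ℝ) ^ (1 - α) / (1 - α) := by
  rw [le_div_iff₀ (by linarith), sum_mul]
  induction T with
  | zero => simpa using rpow_nonneg le_rfl _
  | succ T ih =>
    rw [sum_Ioc_succ_top (Nat.zero_le T)]
    have := one_sub_mul_rpow_neg_le_rpow_sub_rpow hα0 hα1.le (Nat.cast_nonneg T)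
    push_cast
    linarith

theorem sum_range_rpow_sub_one_div_le (hα0 : 0 ≤ α) (hα1 : α < 1) {c : ℝ} (hc : 0 < c) (K : ℕ) :
    ∑ k ∈ range K, (c + k) ^ (α - 1) / (c + k + 1) ≤ c ^ (α - 1) / (1 - α) := by
  rw [le_div_iff₀ (by linarith), sum_mul]
  calc ∑ k ∈ range K, (c + k) ^ (α - 1) / (c + k + 1) * (1 - α)
      ≤ ∑ k ∈ range K, ((c + k) ^ (α - 1) - (c + (k + 1 : ℕ)) ^ (α - 1)) := by
        gcongr with k
        rw [mul_comm, Nat.cast_succ, ← add_assoc]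
        exact one_sub_mul_rpow_sub_one_div_le hα0 hα1.le (by positivity)
    _ = c ^ (α - 1) - (c + K) ^ (α - 1) := by
        simpa using sum_range_sub' (fun k : ℕ => (c + k) ^ (α - 1)) K
    _ ≤ c ^ (α - 1) := sub_le_self _ (rpow_nonneg (by positivity) _)

end Real

open Real

section

variable {f : ℕ → ℝ} {C α : ℝ}

theorem sum_Icc_floor_div_sub_tsum_mul_eq
    (hs : Summable fun n : ℕ => f (n + 1) / (((n : ℝ) + 1) * ((n : ℝ) + 2))) (x : ℝ) (M : ℕ) :
    (∑ n ∈ Icc 1 ⌊x⌋₊, f ⌊x / (n : ℝ)⌋₊) -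
        (∑' n : ℕ, f (n + 1) / (((n : ℝ) + 1) * ((n : ℝ) + 2))) * x =
      ∑ n ∈ Ioc 0 (⌊x⌋₊ / (M + 1)), f (⌊x⌋₊ / n)
        + ∑ m ∈ Ioc 0 M,
            (((⌊x⌋₊ / m - ⌊x⌋₊ / (m + 1) : ℕ) : ℝ) * f m - x * (f m / (m * (m + 1))))
        - (∑' k : ℕ, f (k + M + 1) / ((((k + M : ℕ) : ℝ) + 1) * (((k + M : ℕ) : ℝ) + 2))) * x := by
  have hhead : ∑ n ∈ range M, f (n + 1) / (((n : ℝ) + 1) * ((n : ℝ) + 2)) =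
      ∑ m ∈ Ioc 0 M, f m / ((m : ℝ) * (m + 1)) := by
    rw [range_eq_Ico, ← Ico_add_one_add_one_eq_Ioc, ← sum_Ico_add']
    refine sum_congr rfl fun n _ => ?_
    push_cast
    ring_nf
  simp_rw [Nat.floor_div_natCast]
  rw [show Icc 1 ⌊x⌋₊ = Ioc 0 ⌊x⌋₊ from Icc_add_one_left_eq_Ioc 0 _, sum_Ioc_comp_div_eq f ⌊x⌋₊ M,
    ← hs.sum_add_tsum_nat_add M, hhead, sum_sub_distrib, ← mul_sum]
  simp only [nsmul_eq_mul]
  ring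

theorem sum_Ioc_abs_comp_div_le (hC : 0 ≤ C) (hα0 : 0 ≤ α) (hα1 : α < 1)
    (hf : ∀ n : ℕ, 1 ≤ n → |f n| ≤ C * (n : ℝ) ^ α) {N T : ℕ} (hTN : T ≤ N) :
    ∑ n ∈ Ioc 0 T, |f (N / n)| ≤ C * (N : ℝ) ^ α * ((T : ℝ) ^ (1 - α) / (1 - α)) := by
  calc ∑ n ∈ Ioc 0 T, |f (N / n)| ≤ ∑ n ∈ Ioc 0 T, C * (N : ℝ) ^ α * (n : ℝ) ^ (-α) := by
        refine sum_le_sum fun n hn => ?_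
        obtain ⟨hn0, hnT⟩ := mem_Ioc.mp hn
        calc |f (N / n)| ≤ C * ((N / n : ℕ) : ℝ) ^ α := hf _ (Nat.div_pos (hnT.trans hTN) hn0)
          _ ≤ C * ((N : ℝ) / n) ^ α := by gcongr; exact Nat.cast_div_le
          _ = C * (N : ℝ) ^ α * (n : ℝ) ^ (-α) := by
            rw [div_rpow (by positivity) (by positivity), rpow_neg (by positivity), div_eq_mul_inv,
              mul_assoc]
    _ = C * (N : ℝ) ^ α * ∑ n ∈ Ioc 0 T, (n : ℝ) ^ (-α) := (mul_sum _ _ _).symm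
    _ ≤ C * (N : ℝ) ^ α * ((T : ℝ) ^ (1 - α) / (1 - α)) := by
        gcongr
        exact sum_Ioc_rpow_neg_le hα0 hα1 T

theorem abs_natCast_floor_div_sub_floor_div_sub_le {x : ℝ} (hx : 0 ≤ x) {m : ℕ} (hm : 0 < m) :
    |((⌊x⌋₊ / m - ⌊x⌋₊ / (m + 1) : ℕ) : ℝ) - x / (m * (m + 1))| ≤ 1 := by
  rw [Nat.cast_sub (Nat.div_le_div_left (Nat.le_succ m) hm), ← Nat.floor_div_natCast,
    ← Nat.floor_div_natCast, Nat.cast_succ]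
  have hm' : (0 : ℝ) < m := by exact_mod_cast hm
  have h₁ := Nat.floor_le (div_nonneg hx hm'.le)
  have h₂ := Nat.lt_floor_add_one (x / m)
  have h₃ := Nat.floor_le (div_nonneg hx (by positivity : (0 : ℝ) ≤ m + 1))
  have h₄ := Nat.lt_floor_add_one (x / (m + 1))
  have hsplit : x / (m * (m + 1)) = x / m - x / (m + 1) := by field_simp; ring
  rw [hsplit, abs_le]
  constructor <;> linarith

theorem abs_sum_Ioc_floor_div_sub_le (hC : 0 ≤ C) (hα0 : 0 ≤ α)
    (hf : ∀ n : ℕ, 1 ≤ n → |f n| ≤ C * (n : ℝ) ^ α) {x : ℝ} (hx : 0 ≤ x) (K : ℕ) :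
    |∑ m ∈ Ioc 0 K, (((⌊x⌋₊ / m - ⌊x⌋₊ / (m + 1) : ℕ) : ℝ) * f m - x * (f m / (m * (m + 1))))|
      ≤ C * (K : ℝ) ^ (1 + α) := by
  refine (abs_sum_le_sum_abs _ _).trans ?_
  calc _ ≤ ∑ m ∈ Ioc 0 K, C * (K : ℝ) ^ α := by
        refine sum_le_sum fun m hm => ?_
        obtain ⟨hm0, hmK⟩ := mem_Ioc.mp hm
        rw [show ((⌊x⌋₊ / m - ⌊x⌋₊ / (m + 1) : ℕ) : ℝ) * f m - x * (f m / (m * (m + 1))) =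
            f m * (((⌊x⌋₊ / m - ⌊x⌋₊ / (m + 1) : ℕ) : ℝ) - x / (m * (m + 1))) by ring, abs_mul]
        calc |f m| * |((⌊x⌋₊ / m - ⌊x⌋₊ / (m + 1) : ℕ) : ℝ) - x / (m * (m + 1))|
            ≤ C * (m : ℝ) ^ α * 1 :=
              mul_le_mul (hf m hm0) (abs_natCast_floor_div_sub_floor_div_sub_le hx hm0)
                (abs_nonneg _) (by positivity)
          _ ≤ C * (K : ℝ) ^ α := by rw [mul_one]; gcongr
    _ = C * (K : ℝ) ^ (1 + α) := by
        rw [sum_const, Nat.card_Ioc, nsmul_eq_mul, rpow_one_add' (Nat.cast_nonneg K) (by linarith),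
          Nat.sub_zero]
        ring

theorem abs_div_add_one_mul_add_two_le (hf : ∀ n : ℕ, 1 ≤ n → |f n| ≤ C * (n : ℝ) ^ α)
    (n : ℕ) :
    |f (n + 1) / (((n : ℝ) + 1) * ((n : ℝ) + 2))|
      ≤ C * (((n : ℝ) + 1) ^ (α - 1) / ((n : ℝ) + 1 + 1)) := by
  rw [abs_div, abs_of_pos (a := ((n : ℝ) + 1) * ((n : ℝ) + 2)) (by positivity),
    rpow_sub_one (by positivity)]
  calc |f (n + 1)| / (((n : ℝ) + 1) * ((n : ℝ) + 2))
      ≤ C * ((n : ℝ) + 1) ^ α / (((n : ℝ) + 1) * ((n : ℝ) + 2)) := by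
        gcongr
        exact_mod_cast hf (n + 1) (Nat.le_add_left 1 n)
    _ = _ := by field_simp; ring

theorem summable_and_abs_tsum_le_of_abs_le {u : ℕ → ℝ} {c : ℝ} (hC : 0 ≤ C) (hα0 : 0 ≤ α)
    (hα1 : α < 1) (hc : 0 < c) (hu : ∀ k : ℕ, |u k| ≤ C * ((c + k) ^ (α - 1) / (c + k + 1))) :
    Summable u ∧ |∑' k, u k| ≤ C * (c ^ (α - 1) / (1 - α)) := by
  set b : ℕ → ℝ := fun k => C * ((c + k) ^ (α - 1) / (c + k + 1))
  have hb0 : ∀ k, 0 ≤ b k := fun k => by positivity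
  have hpartial : ∀ K, ∑ k ∈ range K, b k ≤ C * (c ^ (α - 1) / (1 - α)) := fun K => by
    rw [← mul_sum]
    exact mul_le_mul_of_nonneg_left (sum_range_rpow_sub_one_div_le hα0 hα1 hc K) hC
  have hb : Summable b := summable_of_sum_range_le hb0 hpartial
  refine ⟨hb.of_norm_bounded hu, ?_⟩
  calc |∑' k, u k| ≤ ∑' k, b k := by
        simpa only [Real.norm_eq_abs] using tsum_of_norm_bounded (f := u) hb.hasSum hu
    _ ≤ _ := tsum_le_of_sum_range_le hb0 hpartial

theorem summable_shift_and_abs_tsum_le (hC : 0 ≤ C) (hα0 : 0 ≤ α) (hα1 : α < 1)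
    (hf : ∀ n : ℕ, 1 ≤ n → |f n| ≤ C * (n : ℝ) ^ α) (M : ℕ) :
    Summable (fun k : ℕ => f (k + M + 1) / ((((k + M : ℕ) : ℝ) + 1) * (((k + M : ℕ) : ℝ) + 2))) ∧
      |∑' k : ℕ, f (k + M + 1) / ((((k + M : ℕ) : ℝ) + 1) * (((k + M : ℕ) : ℝ) + 2))|
        ≤ C * (((M : ℝ) + 1) ^ (α - 1) / (1 - α)) :=
  summable_and_abs_tsum_le_of_abs_le hC hα0 hα1 (by positivity) fun k => by
    convert abs_div_add_one_mul_add_two_le hf (k + M) using 4 <;> push_cast <;> ring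

theorem abs_sum_Ioc_comp_div_le_sqrt (hC : 0 ≤ C) (hα0 : 0 ≤ α) (hα1 : α < 1)
    (hf : ∀ n : ℕ, 1 ≤ n → |f n| ≤ C * (n : ℝ) ^ α) {x : ℝ} (hx : 0 < x) :
    |∑ n ∈ Ioc 0 (⌊x⌋₊ / (⌊√x⌋₊ + 1)), f (⌊x⌋₊ / n)| ≤ C / (1 - α) * √x ^ (1 + α) := by
  have hs : 0 < √x := sqrt_pos.mpr hx
  have hN : (⌊x⌋₊ : ℝ) ≤ √x ^ 2 := by rw [sq_sqrt hx.le]; exact Nat.floor_le hx.le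
  have hT : ((⌊x⌋₊ / (⌊√x⌋₊ + 1) : ℕ) : ℝ) ≤ √x :=
    calc ((⌊x⌋₊ / (⌊√x⌋₊ + 1) : ℕ) : ℝ) ≤ (⌊x⌋₊ : ℝ) / (⌊√x⌋₊ + 1 : ℕ) := Nat.cast_div_le
      _ ≤ √x ^ 2 / √x := by push_cast; gcongr; exact (Nat.lt_floor_add_one _).le
      _ = √x := by field_simp
  calc _ ≤ ∑ n ∈ Ioc 0 (⌊x⌋₊ / (⌊√x⌋₊ + 1)), |f (⌊x⌋₊ / n)| := abs_sum_le_sum_abs _ _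
    _ ≤ C * (⌊x⌋₊ : ℝ) ^ α * (((⌊x⌋₊ / (⌊√x⌋₊ + 1) : ℕ) : ℝ) ^ (1 - α) / (1 - α)) :=
        sum_Ioc_abs_comp_div_le hC hα0 hα1 hf (Nat.div_le_self _ _)
    _ ≤ C * (√x ^ 2) ^ α * (√x ^ (1 - α) / (1 - α)) := by gcongr
    _ = C / (1 - α) * ((√x ^ 2) ^ α * √x ^ (1 - α)) := by ring
    _ = C / (1 - α) * √x ^ (1 + α) := by
        rw [← rpow_natCast_mul hs.le, ← rpow_add hs]
        ring_nf

theorem abs_sum_Ioc_floor_div_sub_le_sqrt (hC : 0 ≤ C) (hα0 : 0 ≤ α) (hα1 : α < 1)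
    (hf : ∀ n : ℕ, 1 ≤ n → |f n| ≤ C * (n : ℝ) ^ α) {x : ℝ} (hx : 0 ≤ x) :
    |∑ m ∈ Ioc 0 ⌊√x⌋₊,
        (((⌊x⌋₊ / m - ⌊x⌋₊ / (m + 1) : ℕ) : ℝ) * f m - x * (f m / (m * (m + 1))))|
      ≤ C / (1 - α) * √x ^ (1 + α) :=
  (abs_sum_Ioc_floor_div_sub_le hC hα0 hf hx _).trans <|
    mul_le_mul (le_div_self hC (by linarith) (by linarith))
      (by gcongr; exact Nat.floor_le (sqrt_nonneg x)) (by positivity) (by positivity)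

theorem abs_tsum_shift_mul_le_sqrt (hC : 0 ≤ C) (hα0 : 0 ≤ α) (hα1 : α < 1)
    (hf : ∀ n : ℕ, 1 ≤ n → |f n| ≤ C * (n : ℝ) ^ α) {x : ℝ} (hx : 0 < x) :
    |∑' k : ℕ, f (k + ⌊√x⌋₊ + 1) / ((((k + ⌊√x⌋₊ : ℕ) : ℝ) + 1) * (((k + ⌊√x⌋₊ : ℕ) : ℝ) + 2))| * x
      ≤ C / (1 - α) * √x ^ (1 + α) := by
  have hs : 0 < √x := sqrt_pos.mpr hx
  calc _ ≤ C * (((⌊√x⌋₊ : ℝ) + 1) ^ (α - 1) / (1 - α)) * √x ^ (2 : ℝ) := by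
        rw [rpow_two, sq_sqrt hx.le]
        gcongr
        exact (summable_shift_and_abs_tsum_le hC hα0 hα1 hf _).2
    _ ≤ C * (√x ^ (α - 1) / (1 - α)) * √x ^ (2 : ℝ) := by
        have := rpow_le_rpow_of_nonpos hs (Nat.lt_floor_add_one √x).le (by linarith : α - 1 ≤ 0)
        gcongr
    _ = C / (1 - α) * (√x ^ (α - 1) * √x ^ (2 : ℝ)) := by ring
    _ = C / (1 - α) * √x ^ (1 + α) := by
        rw [← rpow_add hs]
        ring_nf

end

theorem stmt_1 (f : ℕ → ℝ) (C α : ℝ) (hC : 0 < C) (hα0 : 0 ≤ α) (hα1 : α < 1)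
    (hf : ∀ n : ℕ, 1 ≤ n → |f n| ≤ C * (n : ℝ) ^ α) :
    ∃ K > 0, ∀ x : ℝ, 2 ≤ x →
      |(∑ n ∈ Finset.Icc 1 ⌊x⌋₊, f ⌊x / (n : ℝ)⌋₊) -
        (∑' n : ℕ, f (n + 1) / (((n : ℝ) + 1) * ((n : ℝ) + 2))) * x|
      ≤ K * x ^ ((1 + α) / 2) := by
  have hα : 0 < 1 - α := by linarith
  refine ⟨3 * C / (1 - α), by positivity, fun x hx => ?_⟩
  have hx0 : 0 < x := by linarith
  have hsum : Summable fun n : ℕ => f (n + 1) / (((n : ℝ) + 1) * ((n : ℝ) + 2)) :=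
    (summable_shift_and_abs_tsum_le hC.le hα0 hα1 hf 0).1
  have hx_rpow : √x ^ (1 + α) = x ^ ((1 + α) / 2) := by
    rw [sqrt_eq_rpow, ← rpow_mul hx0.le]; ring_nf
  have hhead := abs_sum_Ioc_comp_div_le_sqrt hC.le hα0 hα1 hf hx0
  have hmid := abs_sum_Ioc_floor_div_sub_le_sqrt hC.le hα0 hα1 hf hx0.le
  have htail := abs_tsum_shift_mul_le_sqrt hC.le hα0 hα1 hf hx0
  have habs : ∀ a b t : ℝ, |a + b - t * x| ≤ |a| + |b| + |t| * x := fun a b t =>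
    calc |a + b - t * x| ≤ |a + b| + |t * x| := abs_sub _ _
      _ ≤ |a| + |b| + |t| * x := by rw [abs_mul, abs_of_pos hx0]; gcongr; exact abs_add_le _ _
  rw [sum_Icc_floor_div_sub_tsum_mul_eq hsum x ⌊√x⌋₊, ← hx_rpow]
  calc _ ≤ _ := habs _ _ _
    _ ≤ _ := add_le_add (add_le_add hhead hmid) htail
    _ = 3 * C / (1 - α) * √x ^ (1 + α) := by ring
end

section
/- For each integer r \ge 2 and each integer l with 1 \le l \le r, there exist polynomials P_l and Q_l of degree l-1 with nonzero integer coefficients such that |P_l(x)(1-x)^r - Q_l(x)| \ll |x|^{2l-1} as x \to 0. -/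
open Polynomial Finset


noncomputable def gP (r m : ℕ) : ℕ → Polynomial ℤ
  | 0 => 1
  | i + 1 =>
      (1 - X) * (X * derivative (gP r m i) - C ((m : ℤ) + 1 + i) * gP r m i)
        - C ((r : ℤ) + m - i) * (X * gP r m i)

def FF (r m i k : ℕ) : ℤ :=
  (-1) ^ i * (i.choose k) * (∏ j ∈ range (i - k), ((m : ℤ) + 1 + j))
    * (∏ j ∈ range k, ((r : ℤ) - i + j))

lemma opCoeff (p : Polynomial ℤ) (j : ℤ) (n : ℕ) :
    (X * derivative p - C j * p).coeff n = ((n : ℤ) - j) * p.coeff n := by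
  cases n with
  | zero => simp [coeff_derivative, mul_comm]
  | succ k =>
    simp [coeff_X_mul, coeff_derivative, coeff_C_mul]
    ring

lemma xdCoeff (p : Polynomial ℤ) (n : ℕ) :
    (X * derivative p).coeff n = (n : ℤ) * p.coeff n := by
  have := opCoeff p 0 n
  simpa using this

lemma stepCoeff_zero (g : Polynomial ℤ) (a b : ℤ) :
    ((1 - X) * (X * derivative g - C b * g) - C a * (X * g)).coeff 0 = -b * g.coeff 0 := by
  have e : (1 - X) * (X * derivative g - C b * g) - C a * (X * g)
      = (X * derivative g - C b * g) - X * (X * derivative g - C b * g) - C a * (X * g) := by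
    ring
  rw [e]
  simp [mul_coeff_zero, coeff_C_mul, xdCoeff]

lemma stepCoeff_succ (g : Polynomial ℤ) (a b : ℤ) (k : ℕ) :
    ((1 - X) * (X * derivative g - C b * g) - C a * (X * g)).coeff (k + 1)
      = ((k : ℤ) + 1 - b) * g.coeff (k + 1) + (b - a - k) * g.coeff k := by
  have e : (1 - X) * (X * derivative g - C b * g) - C a * (X * g)
      = (X * derivative g - C b * g) - X * (X * derivative g - C b * g) - C a * (X * g) := by
    ring
  rw [e]
  simp only [coeff_sub, coeff_X_mul, coeff_C_mul, opCoeff, xdCoeff, coeff_derivative]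
  push_cast
  ring

lemma gCoeff (r m : ℕ) : ∀ i k, (gP r m i).coeff k = FF r m i k := by
  intro i
  induction i with
  | zero =>
    intro k
    cases k with
    | zero => simp [gP, FF]
    | succ k => simp [gP, FF, Nat.choose_eq_zero_of_lt, coeff_one]
  | succ i ih =>
    intro k
    cases k with
    | zero =>
      rw [gP, stepCoeff_zero, ih]
      simp only [FF, Nat.sub_zero, Nat.choose_zero_right, prod_range_succ, range_zero,
        prod_empty, pow_succ]
      push_cast
      ring
    | succ k =>
      rw [gP, stepCoeff_succ, ih, ih]
      rcases lt_trichotomy k i with hk | hk | hk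
      · -- main case k < i
        obtain ⟨u, rfl⟩ : ∃ u, i = k + 1 + u := ⟨i - (k + 1), by omega⟩
        have hrel : (((k + 1 + u).choose (k + 1) : ℤ)) * (k + 1)
            = ((k + 1 + u).choose k : ℤ) * (u + 1) := by
          have := Nat.choose_succ_right_eq (k + 1 + u) k
          have h2 : k + 1 + u - k = u + 1 := by omega
          rw [h2] at this
          exact_mod_cast this
        simp only [FF]
        have e1 : k + 1 + u - (k + 1) = u := by omega
        have e2 : k + 1 + u - k = u + 1 := by omega
        have e3 : k + 1 + u + 1 - (k + 1) = u + 1 := by omega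
        rw [e1, e2, e3]
        rw [Nat.choose_succ_succ (k + 1 + u) k]
        rw [prod_range_succ (fun j => ((m : ℤ) + 1 + j)) u]
        have e5 : (∏ j ∈ range (k + 1), ((r : ℤ) - ((k + 1 + u : ℕ) : ℤ) + (j : ℤ)))
            = (∏ j ∈ range k, ((r : ℤ) - ((k + 1 + u : ℕ) : ℤ) + (j : ℤ)))
              * ((r : ℤ) - ((k + 1 + u : ℕ) : ℤ) + (k : ℤ)) := prod_range_succ _ _
        have e4 : (∏ j ∈ range (k + 1), ((r : ℤ) - ((k + 1 + u + 1 : ℕ) : ℤ) + (j : ℤ)))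
            = ((r : ℤ) - ((k + 1 + u : ℕ) : ℤ) - 1)
              * ∏ j ∈ range k, ((r : ℤ) - ((k + 1 + u : ℕ) : ℤ) + (j : ℤ)) := by
          rw [prod_range_succ']
          rw [mul_comm]
          congr 1
          · push_cast; ring
          · exact prod_congr rfl fun j _ => by push_cast; ring
        rw [e5, e4]
        generalize (∏ j ∈ range u, ((m : ℤ) + 1 + (j : ℤ))) = B
        generalize (∏ j ∈ range k, ((r : ℤ) - ((k + 1 + u : ℕ) : ℤ) + (j : ℤ))) = Pk
        push_cast
        linear_combination (B * Pk * ((-1 : ℤ)^u * (-1 : ℤ)^k * ((m : ℤ) + 1 + (u : ℤ)))) * hrel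
      · -- k = i
        subst hk
        simp only [FF, Nat.choose_succ_self, Nat.choose_self, Nat.sub_self]
        have e5 : (∏ j ∈ range (k + 1), ((r : ℤ) - ((k + 1 : ℕ) : ℤ) + (j : ℤ)))
            = ((r : ℤ) - (k : ℤ) - 1) * ∏ j ∈ range k, ((r : ℤ) - (k : ℤ) + (j : ℤ)) := by
          rw [prod_range_succ']
          rw [mul_comm]
          congr 1
          · push_cast; ring
          · exact prod_congr rfl fun j _ => by push_cast; ring
        rw [e5]
        push_cast
        ring
      · -- k > i
        have h1 : i.choose (k + 1) = 0 := Nat.choose_eq_zero_of_lt (by omega)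
        have h2 : i.choose k = 0 := Nat.choose_eq_zero_of_lt (by omega)
        have h3 : (i + 1).choose (k + 1) = 0 := Nat.choose_eq_zero_of_lt (by omega)
        simp [FF, h1, h2, h3]

noncomputable def wP (r m : ℕ) : ℕ → Polynomial ℤ
  | 0 => (1 - X) ^ (r + m)
  | i + 1 => X * derivative (wP r m i) - C ((m : ℤ) + 1 + i) * wP r m i


lemma rodrigues (r m : ℕ) : ∀ i, i ≤ m → wP r m i = (1 - X) ^ (r + (m - i)) * gP r m i := by
  intro i
  induction i with
  | zero => intro _; simp [wP, gP]
  | succ i ih =>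
    intro hi
    have hi' : i ≤ m := by omega
    have hs : r + (m - i) = (r + (m - (i + 1))) + 1 := by omega
    set s := r + (m - (i + 1)) with hsdef
    rw [wP, ih hi', hs, gP]
    have hd : derivative ((1 - X : Polynomial ℤ) ^ (s + 1) * gP r m i)
        = (1 - X) ^ s * (-(((s + 1 : ℕ) : Polynomial ℤ)) * gP r m i
            + (1 - X) * derivative (gP r m i)) := by
      rw [derivative_mul, derivative_pow]
      simp only [derivative_sub, derivative_one, derivative_X, zero_sub, Nat.add_sub_cancel]
      ring_nf
      simp only [C_eq_natCast]
      ring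
    rw [hd]
    have hC : (C ((r : ℤ) + m - i) : Polynomial ℤ) = ((s + 1 : ℕ) : Polynomial ℤ) := by
      rw [show (r : ℤ) + m - i = ((s + 1 : ℕ) : ℤ) by
        push_cast; omega]
      exact C_eq_natCast _
    rw [hC]
    have hC2 : (C ((m : ℤ) + 1 + i) : Polynomial ℤ)
        = ((m : Polynomial ℤ) + 1 + (i : Polynomial ℤ)) := by
      rw [show (m : ℤ) + 1 + i = ((m + 1 + i : ℕ) : ℤ) by push_cast; ring]
      rw [C_eq_natCast]; push_cast; ring
    rw [hC2]
    ring

lemma wCoeff (r m i n : ℕ) :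
    (wP r m i).coeff n
      = (∏ j ∈ range i, ((n : ℤ) - ((m : ℤ) + 1 + j)))
        * ((1 - X : Polynomial ℤ) ^ (r + m)).coeff n := by
  induction i with
  | zero => simp [wP]
  | succ i ih => rw [wP, opCoeff, ih, prod_range_succ]; ring

lemma oneSubXpow_coeff (N n : ℕ) :
    ((1 - X : Polynomial ℤ) ^ N).coeff n = (-1 : ℤ) ^ N * ((-1 : ℤ) ^ (N - n) * N.choose n) := by
  have e : (1 - X : Polynomial ℤ) = C (-1) * (X + C (-1)) := by
    simp only [map_neg, map_one]
    ring
  rw [e, mul_pow, ← map_pow, coeff_C_mul, coeff_X_add_C_pow]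

lemma oneSubXpow_ne (N n : ℕ) (h : n ≤ N) : ((1 - X : Polynomial ℤ) ^ N).coeff n ≠ 0 := by
  rw [oneSubXpow_coeff]
  have := Nat.choose_pos h
  positivity

theorem stmt_3 (r l : ℕ) (hr : 2 ≤ r) (hl1 : 1 ≤ l) (hlr : l ≤ r) :
    ∃ P Q : Polynomial ℤ,
      P.natDegree = l - 1 ∧ Q.natDegree = l - 1 ∧
      (∀ i ≤ l - 1, P.coeff i ≠ 0 ∧ Q.coeff i ≠ 0) ∧
      ∃ δ K : ℝ, 0 < δ ∧ 0 < K ∧ ∀ x : ℝ, |x| < δ →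
        |(Polynomial.aeval x P) * (1 - x) ^ r - (Polynomial.aeval x Q)|
          ≤ K * |x| ^ (2 * l - 1) := by
  obtain ⟨m, rfl⟩ : ∃ m, l = m + 1 := ⟨l - 1, by omega⟩
  have hmr : m + 1 ≤ r := hlr
  simp only [Nat.add_sub_cancel, show 2 * (m + 1) - 1 = 2 * m + 1 from by omega]
  set P := gP r m m with hP
  set Q : Polynomial ℤ := ∑ n ∈ range (m + 1), (monomial n) ((wP r m m).coeff n) with hQ
  -- coefficients of Q
  have hQc : ∀ n : ℕ, Q.coeff n = if n < m + 1 then (wP r m m).coeff n else 0 := by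
    intro n
    rw [hQ, finset_sum_coeff]
    simp only [coeff_monomial]
    rw [Finset.sum_ite_eq' (range (m + 1)) n]
    simp [Finset.mem_range]
  -- nonzeroness of P's coefficients
  have hFne : ∀ k ≤ m, FF r m m k ≠ 0 := by
    intro k hk
    have h1 : ((m.choose k : ℤ)) ≠ 0 := by
      exact_mod_cast (Nat.choose_pos hk).ne'
    have h2 : (∏ j ∈ range (m - k), ((m : ℤ) + 1 + j)) ≠ 0 := by
      apply Finset.prod_ne_zero_iff.mpr
      intro j _
      positivity
    have h3 : (∏ j ∈ range k, ((r : ℤ) - m + j)) ≠ 0 := by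
      apply Finset.prod_ne_zero_iff.mpr
      intro j _
      have : (m : ℤ) < r := by exact_mod_cast hmr
      have : (0 : ℤ) ≤ j := Int.natCast_nonneg j
      omega
    have h4 : ((-1 : ℤ)) ^ m ≠ 0 := by positivity
    exact mul_ne_zero (mul_ne_zero (mul_ne_zero h4 h1) h2) h3
  have hPne : ∀ k ≤ m, P.coeff k ≠ 0 := by
    intro k hk
    rw [hP, gCoeff]
    exact hFne k hk
  have hPdeg : P.natDegree = m := by
    apply le_antisymm
    · apply natDegree_le_iff_coeff_eq_zero.mpr
      intro N hN
      rw [hP, gCoeff]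
      simp [FF, Nat.choose_eq_zero_of_lt hN]
    · exact le_natDegree_of_ne_zero (hPne m le_rfl)
  -- nonzeroness of W coefficients, low range
  have hWne : ∀ n ≤ m, (wP r m m).coeff n ≠ 0 := by
    intro n hn
    rw [wCoeff]
    apply mul_ne_zero
    · apply Finset.prod_ne_zero_iff.mpr
      intro j _
      have : (0 : ℤ) ≤ j := Int.natCast_nonneg j
      omega
    · exact oneSubXpow_ne (r + m) n (by omega)
  have hQne : ∀ n ≤ m, Q.coeff n ≠ 0 := by
    intro n hn
    rw [hQc, if_pos (by omega)]
    exact hWne n hn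
  have hQdeg : Q.natDegree = m := by
    apply le_antisymm
    · apply natDegree_le_iff_coeff_eq_zero.mpr
      intro N hN
      rw [hQc, if_neg (by omega)]
    · exact le_natDegree_of_ne_zero (hQne m le_rfl)
  -- the key vanishing
  have hPW : P * (1 - X) ^ r = wP r m m := by
    have h := rodrigues r m m le_rfl
    rw [Nat.sub_self, Nat.add_zero] at h
    rw [h, hP]
    ring
  have hkey : ∀ n, n < 2 * m + 1 → (P * (1 - X) ^ r - Q).coeff n = 0 := by
    intro n hn
    rw [coeff_sub, hPW, hQc]
    by_cases h : n < m + 1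
    · rw [if_pos h, sub_self]
    · rw [if_neg h, wCoeff, sub_zero]
      apply mul_eq_zero_of_left
      apply Finset.prod_eq_zero (i := n - (m + 1)) (Finset.mem_range.mpr (by omega))
      have : (m + 1 : ℕ) ≤ n := by omega
      push_cast [Nat.cast_sub this]
      ring
  obtain ⟨T, hT⟩ : (X : Polynomial ℤ) ^ (2 * m + 1) ∣ P * (1 - X) ^ r - Q :=
    X_pow_dvd_iff.mpr hkey
  refine ⟨P, Q, hPdeg, hQdeg, fun i hi => ⟨hPne i hi, hQne i hi⟩, 1,
    1 + ∑ i ∈ range (T.natDegree + 1), |((T.coeff i : ℝ))|, one_pos, ?_, ?_⟩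
  · have : (0 : ℝ) ≤ ∑ i ∈ range (T.natDegree + 1), |((T.coeff i : ℝ))| :=
      Finset.sum_nonneg fun i _ => abs_nonneg _
    linarith
  · intro x hx
    set K : ℝ := 1 + ∑ i ∈ range (T.natDegree + 1), |((T.coeff i : ℝ))| with hK
    have hD : (aeval x) P * (1 - x) ^ r - (aeval x) Q = x ^ (2 * m + 1) * (aeval x) T := by
      have h1 := congrArg (aeval x) hT
      simpa [mul_sub, sub_mul] using h1
    rw [hD, abs_mul, abs_pow]
    have hbound : |(aeval x) T| ≤ K := by
      rw [aeval_eq_sum_range]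
      calc |∑ i ∈ range (T.natDegree + 1), T.coeff i • x ^ i|
          ≤ ∑ i ∈ range (T.natDegree + 1), |T.coeff i • x ^ i| :=
            Finset.abs_sum_le_sum_abs _ _
        _ ≤ ∑ i ∈ range (T.natDegree + 1), |((T.coeff i : ℝ))| := by
            apply Finset.sum_le_sum
            intro i _
            rw [zsmul_eq_mul, abs_mul, abs_pow]
            have h2 : |x| ^ i ≤ 1 := pow_le_one₀ (abs_nonneg x) hx.le
            nlinarith [abs_nonneg ((T.coeff i : ℝ))]
        _ ≤ K := by rw [hK]; linarith
    calc |x| ^ (2 * m + 1) * |(aeval x) T| ≤ |x| ^ (2 * m + 1) * K := by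
          apply mul_le_mul_of_nonneg_left hbound (by positivity)
      _ = K * |x| ^ (2 * m + 1) := by ring
end

section
/- Let r \ge 2, \alpha \ge 0, and suppose |h(d)| \le C d^\alpha with \alpha < 2r - 1. Then for 1 \le B \le A \le x, \sum_{(x/A)^{1/r} < d < (x/B)^{1/r}} |h(d)| \cdot (\lfloor x/d^r \rfloor - \lfloor x/(d^r+1) \rfloor) \ll (A^2/x)(x/A)^{(1+\alpha)/r} + (x/B)^{(1+\alpha)/r}. -/
open Real Finset

/-!
For `d ≥ 1` the weight `⌊x/d^r⌋ - ⌊x/(d^r+1)⌋` is at most `x/d^(2r) + 1`, so the sum is at most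
`C (x ∑_{d > D} d^(α-2r) + ∑_{d < M} d^α)` with `D = ⌊(x/A)^(1/r)⌋` and `M = ⌈(x/B)^(1/r)⌉`.
As `2r - α > 1`, comparison with `∫_D^∞ t^(α-2r) dt` bounds the first part by
`≪ x D^(1+α-2r) ≍ (A²/x)(x/A)^((1+α)/r)`; the second has at most `M ≪ (x/B)^(1/r)` terms,
each at most `(x/B)^(α/r)`.
-/

lemma natFloor_div_sub_natFloor_div_add_one_le {x P : ℝ} (hx : 0 ≤ x) (hP : 0 < P) :
    (⌊x / P⌋₊ : ℝ) - ⌊x / (P + 1)⌋₊ ≤ x / P ^ 2 + 1 := by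
  have hdiff : x / P - x / (P + 1) ≤ x / P ^ 2 := by
    have hsplit : x / P - x / (P + 1) = x / (P * (P + 1)) := by field_simp; ring
    rw [hsplit, sq]
    gcongr
    linarith
  linarith [Nat.floor_le (div_nonneg hx hP.le), Nat.sub_one_lt_floor (x / (P + 1))]

lemma natFloor_div_add_one_le_natFloor_div {x P : ℝ} (hx : 0 ≤ x) (hP : 0 < P) :
    (⌊x / (P + 1)⌋₊ : ℝ) ≤ ⌊x / P⌋₊ := by
  gcongr
  linarith

lemma sum_abs_mul_natFloor_sub_le (r : ℕ) (h : ℕ → ℝ) {C α x : ℝ}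
    (hh : ∀ d : ℕ, 1 ≤ d → |h d| ≤ C * (d : ℝ) ^ α) (hx : 0 ≤ x) {S : Finset ℕ}
    (hS : ∀ d ∈ S, 1 ≤ d) :
    ∑ d ∈ S, |h d| * ((⌊x / (d : ℝ) ^ r⌋₊ : ℝ) - (⌊x / ((d : ℝ) ^ r + 1)⌋₊ : ℝ))
      ≤ C * (x * ∑ d ∈ S, (d : ℝ) ^ (-(2 * r - α)) + ∑ d ∈ S, (d : ℝ) ^ α) := by
  rw [mul_sum, mul_add, mul_sum, mul_sum, ← sum_add_distrib]
  refine sum_le_sum fun d hd ↦ ?_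
  have hd₀ : (0 : ℝ) < d := by exact_mod_cast hS d hd
  have hP : 0 < (d : ℝ) ^ r := by positivity
  have hexp : (d : ℝ) ^ (-(2 * r - α)) = d ^ α / ((d : ℝ) ^ r) ^ 2 := by
    rw [neg_sub, rpow_sub hd₀, ← pow_mul, ← rpow_natCast]
    push_cast
    ring_nf
  calc |h d| * ((⌊x / (d : ℝ) ^ r⌋₊ : ℝ) - (⌊x / ((d : ℝ) ^ r + 1)⌋₊ : ℝ))
      ≤ C * d ^ α * (x / ((d : ℝ) ^ r) ^ 2 + 1) :=
        mul_le_mul (hh d (hS d hd)) (natFloor_div_sub_natFloor_div_add_one_le hx hP)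
          (sub_nonneg.2 (natFloor_div_add_one_le_natFloor_div hx hP))
          ((abs_nonneg _).trans (hh d (hS d hd)))
    _ = C * (x * (d : ℝ) ^ (-(2 * r - α))) + C * (d : ℝ) ^ α := by
        rw [hexp]
        ring

lemma sum_Ioc_rpow_neg_le {s : ℝ} (hs : 1 < s) {D : ℕ} (hD : 0 < D) (M : ℕ) :
    ∑ d ∈ Ioc D M, (d : ℝ) ^ (-s) ≤ (D : ℝ) ^ (1 - s) / (s - 1) := by
  rcases le_total M D with hMD | hDM
  · rw [Ioc_eq_empty_of_le hMD, sum_empty]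
    exact div_nonneg (by positivity) (by linarith)
  have hD₀ : (0 : ℝ) < D := by exact_mod_cast hD
  have hanti : AntitoneOn (fun t : ℝ ↦ t ^ (-s)) (Set.Icc D M) := fun a ha b _ hab ↦
    rpow_le_rpow_of_nonpos (hD₀.trans_le ha.1) hab (by linarith)
  have hzero : (0 : ℝ) ∉ Set.uIcc (D : ℝ) M := by
    rw [Set.uIcc_of_le (by exact_mod_cast hDM)]
    exact fun h ↦ hD₀.not_ge h.1
  calc ∑ d ∈ Ioc D M, (d : ℝ) ^ (-s) = ∑ i ∈ Ico D M, ((i + 1 : ℕ) : ℝ) ^ (-s) := by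
        rw [← Ico_add_one_add_one_eq_Ioc, sum_Ico_add' (fun d : ℕ ↦ (d : ℝ) ^ (-s))]
    _ ≤ ∫ t in (D : ℝ)..M, t ^ (-s) := hanti.sum_le_integral_Ico hDM
    _ = ((D : ℝ) ^ (1 - s) - (M : ℝ) ^ (1 - s)) / (s - 1) := by
        rw [integral_rpow (Or.inr ⟨by linarith, hzero⟩), neg_add_eq_sub, ← neg_sub s 1,
          div_neg, ← neg_div, neg_sub]
    _ ≤ (D : ℝ) ^ (1 - s) / (s - 1) := by
        gcongr
        exact sub_le_self _ (by positivity)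

lemma natFloor_rpow_le {y t : ℝ} (hy : 1 ≤ y) (ht : t ≤ 0) :
    (⌊y⌋₊ : ℝ) ^ t ≤ 2 ^ (-t) * y ^ t := by
  have hfloor : y / 2 ≤ ⌊y⌋₊ := by
    have h₁ : (1 : ℝ) ≤ ⌊y⌋₊ := by exact_mod_cast Nat.le_floor (by exact_mod_cast hy)
    linarith [Nat.lt_floor_add_one y]
  calc (⌊y⌋₊ : ℝ) ^ t ≤ (y / 2) ^ t := rpow_le_rpow_of_nonpos (by positivity) hfloor ht
    _ = 2 ^ (-t) * y ^ t := by
        rw [div_rpow (by linarith) zero_le_two, rpow_neg zero_le_two, div_eq_inv_mul]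

lemma sum_Ioo_natFloor_rpow_neg_le {s y : ℝ} (hs : 1 < s) (hy : 1 ≤ y) (M : ℕ) :
    ∑ d ∈ Ioo ⌊y⌋₊ M, (d : ℝ) ^ (-s) ≤ 2 ^ (s - 1) / (s - 1) * y ^ (1 - s) := by
  have hD : 0 < ⌊y⌋₊ := Nat.floor_pos.2 hy
  calc ∑ d ∈ Ioo ⌊y⌋₊ M, (d : ℝ) ^ (-s) ≤ ∑ d ∈ Ioc ⌊y⌋₊ M, (d : ℝ) ^ (-s) :=
        sum_le_sum_of_subset_of_nonneg Ioo_subset_Ioc_self fun _ _ _ ↦ by positivity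
    _ ≤ (⌊y⌋₊ : ℝ) ^ (1 - s) / (s - 1) := sum_Ioc_rpow_neg_le hs hD M
    _ ≤ 2 ^ (-(1 - s)) * y ^ (1 - s) / (s - 1) := by
        gcongr
        exact natFloor_rpow_le hy (by linarith)
    _ = 2 ^ (s - 1) / (s - 1) * y ^ (1 - s) := by rw [neg_sub]; ring

lemma sum_Ioo_natCeil_rpow_le {α y : ℝ} (hα : 0 ≤ α) (hy : 1 ≤ y) (D : ℕ) :
    ∑ d ∈ Ioo D ⌈y⌉₊, (d : ℝ) ^ α ≤ 2 * y ^ (1 + α) := by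
  have hterm : ∀ d ∈ Ioo D ⌈y⌉₊, (d : ℝ) ^ α ≤ y ^ α := fun d hd ↦
    rpow_le_rpow (by positivity) (Nat.lt_ceil.1 (mem_Ioo.1 hd).2).le hα
  have hcard : ((Ioo D ⌈y⌉₊).card : ℝ) ≤ 2 * y := by
    have : (Ioo D ⌈y⌉₊).card ≤ ⌈y⌉₊ := by rw [Nat.card_Ioo]; omega
    linarith [(Nat.cast_le (α := ℝ)).2 this, Nat.ceil_lt_add_one (zero_le_one.trans hy)]
  calc ∑ d ∈ Ioo D ⌈y⌉₊, (d : ℝ) ^ α ≤ (Ioo D ⌈y⌉₊).card * y ^ α := by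
        simpa using sum_le_card_nsmul _ _ _ hterm
    _ ≤ 2 * y * y ^ α := by gcongr
    _ = 2 * y ^ (1 + α) := by rw [rpow_add (by linarith), rpow_one, mul_assoc]

lemma mul_rpow_one_div_rpow_sub_eq {x A r β : ℝ} (hx : 0 < x) (hA : 0 < A) (hr : r ≠ 0) :
    x * ((x / A) ^ (1 / r)) ^ (β - 2 * r) = A ^ 2 / x * (x / A) ^ (β / r) := by
  rw [← rpow_mul (by positivity), show 1 / r * (β - 2 * r) = β / r - 2 by field_simp,
    rpow_sub (by positivity), rpow_two]
  field_simp

theorem stmt_10_general (r : ℕ) (h : ℕ → ℝ) (C α : ℝ) (hC : 0 ≤ C)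
    (hα0 : 0 ≤ α) (hα1 : α < 2 * (r : ℝ) - 1)
    (hh : ∀ d : ℕ, 1 ≤ d → |h d| ≤ C * (d : ℝ) ^ α) :
    ∃ K > 0, ∀ x A B : ℝ, 2 ≤ x → 1 ≤ B → B ≤ A → A ≤ x →
      ∑ d ∈ Finset.Ioo ⌊(x / A) ^ ((1 : ℝ) / r)⌋₊ ⌈(x / B) ^ ((1 : ℝ) / r)⌉₊,
        |h d| * ((⌊x / (d : ℝ) ^ r⌋₊ : ℝ) - (⌊x / ((d : ℝ) ^ r + 1)⌋₊ : ℝ))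
      ≤ K * (A ^ 2 / x * (x / A) ^ ((1 + α) / r) + (x / B) ^ ((1 + α) / r)) := by
  have hr : (r : ℝ) ≠ 0 := fun h₀ ↦ by rw [h₀] at hα1; linarith
  set s := 2 * (r : ℝ) - α
  have hs : 1 < s := by linarith
  set c := 2 ^ (s - 1) / (s - 1) + 2
  have hc : 2 ≤ c := le_add_of_nonneg_left (div_nonneg (by positivity) (by linarith))
  refine ⟨C * c + 1, by positivity, fun x A B hx hB hBA hAx ↦ ?_⟩
  have hA : 0 < A := by linarith
  have hT₁ := mul_rpow_one_div_rpow_sub_eq (x := x) (β := 1 + α) (by linarith) hA hr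
  have hT₂ : ((x / B) ^ ((1 : ℝ) / r)) ^ (1 + α) = (x / B) ^ ((1 + α) / r) := by
    rw [← rpow_mul (by positivity), one_div_mul_eq_div]
  have hyA : 1 ≤ (x / A) ^ ((1 : ℝ) / r) := one_le_rpow ((one_le_div hA).2 hAx) (by positivity)
  have hyB : 1 ≤ (x / B) ^ ((1 : ℝ) / r) :=
    one_le_rpow ((one_le_div (by linarith)).2 (hBA.trans hAx)) (by positivity)
  set yA := (x / A) ^ ((1 : ℝ) / r)
  set yB := (x / B) ^ ((1 : ℝ) / r)
  set T₁ := A ^ 2 / x * (x / A) ^ ((1 + α) / r)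
  set T₂ := (x / B) ^ ((1 + α) / r)
  have hT₁₀ : 0 ≤ T₁ := by positivity
  have hT₂₀ : 0 ≤ T₂ := by positivity
  calc _ ≤ C * (x * ∑ d ∈ Ioo ⌊yA⌋₊ ⌈yB⌉₊, (d : ℝ) ^ (-s) + ∑ d ∈ Ioo ⌊yA⌋₊ ⌈yB⌉₊, (d : ℝ) ^ α) :=
        sum_abs_mul_natFloor_sub_le r h hh (by linarith) fun d hd ↦ by
          linarith [(mem_Ioo.1 hd).1]
    _ ≤ C * (x * (2 ^ (s - 1) / (s - 1) * yA ^ (1 - s)) + 2 * yB ^ (1 + α)) := by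
        gcongr
        · exact sum_Ioo_natFloor_rpow_neg_le hs hyA _
        · exact sum_Ioo_natCeil_rpow_le hα0 hyB _
    _ = C * ((c - 2) * T₁ + 2 * T₂) := by
        rw [← hT₁, ← hT₂, show 1 - s = 1 + α - 2 * r by ring]; ring
    _ ≤ (C * c + 1) * (T₁ + T₂) := by
        nlinarith [mul_nonneg hC hT₁₀, mul_nonneg (mul_nonneg hC (sub_nonneg.2 hc)) hT₂₀]

theorem stmt_10 (r : ℕ) (hr : 2 ≤ r) (h : ℕ → ℝ) (C α : ℝ) (hC : 0 ≤ C)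
    (hα0 : 0 ≤ α) (hα1 : α < 2 * (r : ℝ) - 1)
    (hh : ∀ d : ℕ, 1 ≤ d → |h d| ≤ C * (d : ℝ) ^ α) :
    ∃ K > 0, ∀ x A B : ℝ, 2 ≤ x → 1 ≤ B → B ≤ A → A ≤ x →
      ∑ d ∈ Finset.Ioo ⌊(x / A) ^ ((1 : ℝ) / r)⌋₊ ⌈(x / B) ^ ((1 : ℝ) / r)⌉₊,
        |h d| * ((⌊x / (d : ℝ) ^ r⌋₊ : ℝ) - (⌊x / ((d : ℝ) ^ r + 1)⌋₊ : ℝ))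
      ≤ K * (A ^ 2 / x * (x / A) ^ ((1 + α) / r) + (x / B) ^ ((1 + α) / r)) :=
  stmt_10_general r h C α hC hα0 hα1 hh
end
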